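/- Let A be a hom-Lie algebroid over M, E a vector bundle with α ∈ D(E), and ∇^α an A-connection on E with respect to α. For ω in the space Ω_α(A;E) of Θ-compatible E-valued forms (α ∘ ω = Θ*ω), the operator d_{∇^α} defined by the hom-Koszul formula satisfies Θ* ∘ d_{∇^α}ω = α ∘ d_{∇^α}ω, i.e. d_{∇^α} preserves Ω_α(A;E). -/

import Mathlib

/-- An (algebraic model of a) hom-Lie algebroid over a base whose algebra of
smooth functions is `R`, with module of sections `L`.  `θ` is the pullback
`θ^*` of the base map, `Θ` the twist on sections, `anchor` the anchor map
landing in derivations (vector fields). -/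
structure HomLieAlgebroid (R : Type*) [CommRing R] [Algebra ℝ R]
    (L : Type*) [AddCommGroup L] [Module R L] where
  θ : R →+* R
  bracket : L → L → L
  Θ : L →+ L
  anchor : L →ₗ[R] Derivation ℝ R R
  bracket_add_left : ∀ X Y Z, bracket (X + Y) Z = bracket X Z + bracket Y Z
  bracket_add_right : ∀ X Y Z, bracket X (Y + Z) = bracket X Y + bracket X Z
  bracket_skew : ∀ X Y, bracket X Y = - bracket Y X
  homJacobi : ∀ X Y Z,
    bracket (Θ X) (bracket Y Z) + bracket (Θ Z) (bracket X Y) +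
      bracket (Θ Y) (bracket Z X) = 0
  Θ_smul : ∀ (f : R) (X : L), Θ (f • X) = θ f • Θ X
  Θ_bracket : ∀ X Y, Θ (bracket X Y) = bracket (Θ X) (Θ Y)
  leibniz : ∀ (X Y : L) (f : R),
    bracket X (f • Y) = θ f • bracket X Y + anchor X f • Θ Y
  anchor_Θ : ∀ (X : L) (f : R), anchor (Θ X) (θ f) = θ (anchor X f)
  anchor_bracket : ∀ (X Y : L) (f : R),
    anchor (bracket X Y) (θ f) = anchor (Θ X) (anchor Y f) - anchor (Θ Y) (anchor X f)

/-- An `A`-connection on `E` with respect to the module automorphism `α`. -/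
structure HomConnection {R : Type*} [CommRing R] [Algebra ℝ R]
    {L : Type*} [AddCommGroup L] [Module R L]
    (A : HomLieAlgebroid R L) (E : Type*) [AddCommGroup E] [Module R E]
    (α : E ≃ₗ[R] E) where
  conn : L → E → E
  conn_add_left : ∀ X Y s, conn (X + Y) s = conn X s + conn Y s
  conn_add_right : ∀ X s t, conn X (s + t) = conn X s + conn X t
  conn_smul_left : ∀ (f : R) (X : L) (s : E), conn (f • X) s = f • conn X s
  conn_smul_right : ∀ (f : R) (X : L) (s : E),
    conn X (f • s) = A.θ f • conn X s + A.anchor X f • s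
  conn_compat : ∀ X s, conn (A.Θ X) (α s) = α (conn X s)

/-- The `A`-curvature of a hom-connection. -/
def HomConnection.curv {R : Type*} [CommRing R] [Algebra ℝ R]
    {L : Type*} [AddCommGroup L] [Module R L]
    {A : HomLieAlgebroid R L} {E : Type*} [AddCommGroup E] [Module R E]
    {α : E ≃ₗ[R] E} (C : HomConnection A E α) (X Y : L) (s : E) : E :=
  C.conn (A.Θ X) (C.conn Y s) - C.conn (A.Θ Y) (C.conn X s) -
    C.conn (A.bracket X Y) (α s)

/-- The hom-Koszul differential associated to an "action" `c`, a twist `T` and a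
bracket `br`: `dω(X₁,…,X_{p+1}) = Σ_{i<j} (-1)^{i+j} ω([Xᵢ,Xⱼ], TX₁,…,X̂ᵢ,…,X̂ⱼ,…)
+ Σᵢ (-1)^{i+1} c(T^p Xᵢ) (ω(X₁,…,X̂ᵢ,…))` (indices written 1-based). -/
def homD {L E : Type*} [AddCommGroup E] (c : L → E → E) (T : L → L)
    (br : L → L → L) : ∀ p : ℕ, ((Fin p → L) → E) → (Fin (p + 1) → L) → E
  | 0, ω => fun X => c (X 0) (ω Fin.elim0)
  | p + 1, ω => fun X =>
      (∑ i : Fin (p + 2), ∑ j : Fin (p + 2),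
        if h : (i : ℕ) < (j : ℕ) then
          ((-1 : ℤ) ^ ((i : ℕ) + (j : ℕ))) •
            ω (Fin.cons (br (X i) (X j)) fun k : Fin p =>
              T (X (j.succAbove
                ((⟨(i : ℕ), by have hj := j.isLt; omega⟩ : Fin (p + 1)).succAbove k))))
        else 0) +
      ∑ i : Fin (p + 2),
        ((-1 : ℤ) ^ (i : ℕ)) • c (T^[p + 1] (X i)) (ω fun k => X (i.succAbove k))

open Classical in
/-- The set of `(p,q)`-shuffles. -/
noncomputable def shuffles (p q : ℕ) : Finset (Equiv.Perm (Fin (p + q))) :=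
  Finset.univ.filter fun σ =>
    (∀ a b : Fin p, a ≤ b → σ (Fin.castAdd q a) ≤ σ (Fin.castAdd q b)) ∧
    (∀ a b : Fin q, a ≤ b → σ (Fin.natAdd p a) ≤ σ (Fin.natAdd p b))

/-- Wedge-type product of an operator-valued `p`-form with a `q`-form. -/
noncomputable def wedgeApp {L β γ : Type*} [AddCommGroup γ] (p q : ℕ)
    (W : (Fin p → L) → β → γ) (v : (Fin q → L) → β) : (Fin (p + q) → L) → γ :=
  fun X => ∑ σ ∈ shuffles p q,
    (Equiv.Perm.sign σ : ℤ) •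
      W (fun a => X (σ (Fin.castAdd q a))) (v fun b => X (σ (Fin.natAdd p b)))

/-- Wedge product of a scalar `p`-form with an `E`-valued `q`-form. -/
noncomputable def wedgeS {L R E : Type*} [Semiring R] [AddCommGroup E] [Module R E]
    (p q : ℕ) (ω : (Fin p → L) → R) (η : (Fin q → L) → E) : (Fin (p + q) → L) → E :=
  wedgeApp p q (fun Xa e => ω Xa • e) η

section Twist

variable {L E : Type*} [AddCommGroup E] {c : L → E → E} {T : L → L} {br : L → L → L}

theorem map_homD_of_intertwining (φ : E →+ E) (hc : ∀ X s, φ (c X s) = c (T X) (φ s))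
    (hbr : ∀ X Y, T (br X Y) = br (T X) (T Y)) {p : ℕ} {ω : (Fin p → L) → E}
    (hω : ∀ X, φ (ω X) = ω fun k => T (X k)) (X : Fin (p + 1) → L) :
    φ (homD c T br p ω X) = homD c T br p ω fun k => T (X k) := by
  cases p with
  | zero =>
    simp only [homD]
    rw [hc, hω]
    exact congrArg (c _ ∘ ω) (funext fun k => k.elim0)
  | succ p =>
    simp only [homD, map_add, map_sum, map_zsmul]
    congr 1
    · refine Finset.sum_congr rfl fun i _ => Finset.sum_congr rfl fun j _ => ?_
      split_ifs
      · rw [map_zsmul, hω]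
        refine congrArg _ (congrArg ω (funext fun k => Fin.cases ?_ (fun k => ?_) k))
        · simp [hbr]
        · simp
      · exact map_zero φ
    · refine Finset.sum_congr rfl fun i _ => congrArg _ ?_
      rw [hc, hω, (Function.Commute.self_iterate T (p + 1)) (X i)]

end Twist

/-- The hom-Koszul operator `d_{∇^α}` preserves the space `Ω_α(A;E)` of
`Θ`-compatible forms: `Θ^* (d_{∇^α} ω) = α ∘ d_{∇^α} ω`. -/
theorem homKoszul_preserves_compatible
    {R L : Type*} [CommRing R] [Algebra ℝ R] [AddCommGroup L] [Module R L]
    {E : Type*} [AddCommGroup E] [Module R E]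
    (A : HomLieAlgebroid R L) (α : E ≃ₗ[R] E) (C : HomConnection A E α)
    (p : ℕ) (ω : (Fin p → L) → E)
    (hω : ∀ X, α (ω X) = ω fun k => A.Θ (X k)) :
    ∀ X : Fin (p + 1) → L,
      α (homD C.conn A.Θ A.bracket p ω X) =
        homD C.conn A.Θ A.bracket p ω (fun k => A.Θ (X k)) :=
  map_homD_of_intertwining (α : E →+ E) (fun X s => (C.conn_compat X s).symm) A.Θ_bracket hω
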